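/- Fix β₁, α₁, β₂, α₂ ∈ ℂ and set u = t⊗1 − 1⊗t ∈ A = ℂ[t,t⁻¹] ⊗_ℂ ℂ[t,t⁻¹]. Then: (i) for every a ∈ ℂ[t,t⁻¹] the operator σ_a maps the ideal u·A of A into itself; (ii) the kernel of the multiplication map μ : A → ℂ[t,t⁻¹] equals u·A; consequently μ induces a ℂ-linear isomorphism A/(u·A) → ℂ[t,t⁻¹] carrying the operator induced by σ_a on the quotient to ρ^{(β₁+β₂, α₁+α₂)}_a, for every a ∈ ℂ[t,t⁻¹]. (This is the paper's identification V(β₁,α₁) ⊗ V(β₂,α₂)/(t₁−t₂) ≅ V(β₁+β₂, α₁+α₂).) -/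

import Mathlib

open LaurentPolynomial TensorProduct

set_option synthInstance.maxHeartbeats 1000000
set_option maxHeartbeats 1000000
noncomputable section

/-- `R = ℂ[t,t⁻¹]`, the algebra of complex Laurent polynomials. -/
abbrev R := LaurentPolynomial ℂ

/-- Differentiation on Laurent polynomials, as a `ℂ`-linear endomorphism:
`Der (T n) = n • T (n-1)`, i.e. `Der f = f'`. -/
noncomputable def Der : Module.End ℂ R :=
  (Finsupp.lsum ℂ fun n : ℤ =>
    LinearMap.toSpanSingleton ℂ R ((n : ℂ) • LaurentPolynomial.T (n - 1)) :
      (ℤ →₀ ℂ) →ₗ[ℂ] R) ∘ₗ (AddMonoidAlgebra.coeffLinearEquiv ℂ).toLinearMap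

/-- Multiplication by `a ∈ R` as a `ℂ`-linear endomorphism `m_a`. -/
noncomputable def mulE (a : R) : Module.End ℂ R := LinearMap.mulLeft ℂ a

/-- The operator `ρ^{(β,α)}_a : f ↦ -a f' + β a' f + α a f` of the
intermediate-series Virasoro module `V(β,α)`. -/
noncomputable def rho (β α : ℂ) (a : R) : Module.End ℂ R :=
  β • mulE (Der a) + α • mulE a - mulE a * Der

/-- `σ_a = ρ^{(β₁,α₁)}_a ⊗ id + id ⊗ ρ^{(β₂,α₂)}_a` on `A = R ⊗_ℂ R`. -/
noncomputable def sigma' (β₁ α₁ β₂ α₂ : ℂ) (a : R) : Module.End ℂ (R ⊗[ℂ] R) :=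
  TensorProduct.map (rho β₁ α₁ a) LinearMap.id + TensorProduct.map LinearMap.id (rho β₂ α₂ a)

/-- `u = t ⊗ 1 - 1 ⊗ t ∈ R ⊗_ℂ R`. -/
noncomputable def uEl : R ⊗[ℂ] R := (T 1) ⊗ₜ[ℂ] (1 : R) - (1 : R) ⊗ₜ[ℂ] (T 1)

/-! The multiplication map `μ` is split by `f ↦ f ⊗ 1`, and its kernel is generated by the
elements `f ⊗ 1 - 1 ⊗ f`. The `f` for which `f ⊗ 1 - 1 ⊗ f` lies in a given ideal form a
subalgebra that is closed under taking inverses, so for Laurent polynomials `ker μ` is generated by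
the single element `u = t ⊗ 1 - 1 ⊗ t`. By the Leibniz rule,
`ρ^{(β₁+β₂,α₁+α₂)}_a (f g) = ρ^{(β₁,α₁)}_a(f) g + f ρ^{(β₂,α₂)}_a(g)`, i.e. `μ ∘ σ_a = ρ_a ∘ μ`;
this gives both the `σ_a`-invariance of `u·A = ker μ` and the intertwining property of the induced
isomorphism `A/(u·A) ≃ R`. -/

section TensorSquare

variable {k S : Type*} [CommRing k] [CommRing S] [Algebra k S]

def Ideal.tmulOneSubOneTmulSubalgebra (I : Ideal (S ⊗[k] S)) : Subalgebra k S where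
  carrier := {s | s ⊗ₜ[k] 1 - 1 ⊗ₜ[k] s ∈ I}
  mul_mem' {s t} hs ht := by
    have : (s * t) ⊗ₜ[k] (1 : S) - 1 ⊗ₜ[k] (s * t)
        = (s ⊗ₜ[k] 1) * (t ⊗ₜ[k] 1 - 1 ⊗ₜ[k] t) + (1 ⊗ₜ[k] t) * (s ⊗ₜ[k] 1 - 1 ⊗ₜ[k] s) := by
      simp only [mul_sub, Algebra.TensorProduct.tmul_mul_tmul, mul_one, one_mul, mul_comm t s]
      abel
    rw [Set.mem_ofPred_eq, this]
    exact add_mem (I.mul_mem_left _ ht) (I.mul_mem_left _ hs)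
  add_mem' {s t} hs ht := by
    rw [Set.mem_ofPred_eq, add_tmul, tmul_add, add_sub_add_comm]
    exact add_mem hs ht
  algebraMap_mem' r := by
    simp [Algebra.algebraMap_eq_smul_one, smul_tmul]

theorem Ideal.mem_tmulOneSubOneTmulSubalgebra_of_mul_eq_one {I : Ideal (S ⊗[k] S)} {s t : S}
    (hst : s * t = 1) (hs : s ∈ I.tmulOneSubOneTmulSubalgebra) :
    t ∈ I.tmulOneSubOneTmulSubalgebra := by
  have : t ⊗ₜ[k] (1 : S) - 1 ⊗ₜ[k] t = -((t ⊗ₜ[k] t) * (s ⊗ₜ[k] 1 - 1 ⊗ₜ[k] s)) := by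
    simp only [mul_sub, Algebra.TensorProduct.tmul_mul_tmul, mul_one, mul_comm t s, hst]
    abel
  change _ ∈ I
  rw [this]
  exact neg_mem (I.mul_mem_left _ hs)

theorem ker_lmul'_le_of_tmulOneSubOneTmulSubalgebra_eq_top {I : Ideal (S ⊗[k] S)}
    (hI : I.tmulOneSubOneTmulSubalgebra = ⊤) :
    RingHom.ker (Algebra.TensorProduct.lmul' k : S ⊗[k] S →ₐ[k] S) ≤ I := by
  change KaehlerDifferential.ideal k S ≤ I
  rw [← KaehlerDifferential.span_range_eq_ideal, Ideal.span_le]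
  rintro _ ⟨s, rfl⟩
  have hs : s ∈ I.tmulOneSubOneTmulSubalgebra := hI ▸ Algebra.mem_top
  rw [SetLike.mem_coe]
  simpa only [neg_sub] using neg_mem (show s ⊗ₜ[k] 1 - 1 ⊗ₜ[k] s ∈ I from hs)

end TensorSquare

namespace LaurentPolynomial

variable {k : Type*} [CommRing k]

theorem tmulOneSubOneTmulSubalgebra_span_T_one_eq_top :
    (Ideal.span {(T 1 : k[T;T⁻¹]) ⊗ₜ[k] 1 - 1 ⊗ₜ[k] T 1}).tmulOneSubOneTmulSubalgebra = ⊤ := by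
  set B := (Ideal.span {(T 1 : k[T;T⁻¹]) ⊗ₜ[k] 1 - 1 ⊗ₜ[k] T 1}).tmulOneSubOneTmulSubalgebra
  have hT_one : T 1 ∈ B := Ideal.subset_span rfl
  have hT_neg_one : T (-1) ∈ B :=
    Ideal.mem_tmulOneSubOneTmulSubalgebra_of_mul_eq_one (by rw [← T_add]; simp) hT_one
  have hT (n : ℤ) : T n ∈ B := by
    induction n using Int.induction_on with
    | zero => simp [B.one_mem]
    | succ i hi => rw [T_add]; exact B.mul_mem hi hT_one
    | pred i hi => rw [sub_eq_add_neg, T_add]; exact B.mul_mem hi hT_neg_one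
  refine Algebra.eq_top_iff.2 fun f => ?_
  induction f using LaurentPolynomial.induction_on' with
  | add p q hp hq => exact B.add_mem hp hq
  | C_mul_T n a => rw [← smul_eq_C_mul]; exact B.smul_mem (hT n) a

theorem ker_lmul'_eq_span_T_one_tmul_one_sub_one_tmul_T_one :
    RingHom.ker (Algebra.TensorProduct.lmul' k : k[T;T⁻¹] ⊗[k] k[T;T⁻¹] →ₐ[k] k[T;T⁻¹])
      = Ideal.span {T 1 ⊗ₜ[k] 1 - 1 ⊗ₜ[k] T 1} := by
  refine le_antisymm
    (ker_lmul'_le_of_tmulOneSubOneTmulSubalgebra_eq_top tmulOneSubOneTmulSubalgebra_span_T_one_eq_top)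
    (Ideal.span_le.2 ?_)
  simp [RingHom.mem_ker]

end LaurentPolynomial

theorem ker_mul'_eq_span_uEl :
    LinearMap.ker (LinearMap.mul' ℂ R) = Submodule.restrictScalars ℂ (Ideal.span {uEl}) := by
  rw [← Algebra.TensorProduct.lmul'_toLinearMap]
  ext x
  simpa [RingHom.mem_ker, uEl] using
    SetLike.ext_iff.1 (LaurentPolynomial.ker_lmul'_eq_span_T_one_tmul_one_sub_one_tmul_T_one (k := ℂ)) x

theorem mem_span_uEl_iff {x : R ⊗[ℂ] R} : x ∈ Ideal.span {uEl} ↔ LinearMap.mul' ℂ R x = 0 := by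
  rw [← Submodule.restrictScalars_mem ℂ, ← ker_mul'_eq_span_uEl, LinearMap.mem_ker]

theorem Der_T (n : ℤ) : Der (T n) = (n : ℂ) • T (n - 1) := by
  rw [Der, LinearMap.comp_apply]
  exact (Finsupp.lsum_single ℂ _ n 1).trans (one_smul ℂ _)

theorem Der_T_mul_T (m n : ℤ) : Der (T m * T n) = Der (T m) * T n + T m * Der (T n) := by
  simp only [← T_add, Der_T, smul_mul_assoc, mul_smul_comm]
  rw [show m - 1 + n = m + n - 1 by ring, show m + (n - 1) = m + n - 1 by ring, ← add_smul]
  push_cast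
  rfl

theorem Der_mul (f g : R) : Der (f * g) = Der f * g + f * Der g := by
  induction f using LaurentPolynomial.induction_on' with
  | add p q hp hq => simp only [add_mul, map_add, hp, hq]; ring
  | C_mul_T m a =>
    induction g using LaurentPolynomial.induction_on' with
    | add p q hp hq => simp only [mul_add, map_add, hp, hq]; ring
    | C_mul_T n b =>
      simp only [← smul_eq_C_mul, map_smul, Der_T_mul_T, smul_add,
        smul_mul_assoc, mul_smul_comm, smul_smul, mul_comm b a]

theorem rho_mul (β₁ α₁ β₂ α₂ : ℂ) (a f g : R) :
    rho (β₁ + β₂) (α₁ + α₂) a (f * g) = rho β₁ α₁ a f * g + f * rho β₂ α₂ a g := by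
  simp only [rho, mulE, LinearMap.sub_apply, LinearMap.add_apply, LinearMap.smul_apply,
    Module.End.mul_apply, LinearMap.mulLeft_apply, Der_mul, add_smul]
  simp only [Algebra.smul_def]
  ring

theorem mul'_comp_sigma' (β₁ α₁ β₂ α₂ : ℂ) (a : R) :
    LinearMap.mul' ℂ R ∘ₗ sigma' β₁ α₁ β₂ α₂ a = rho (β₁ + β₂) (α₁ + α₂) a ∘ₗ LinearMap.mul' ℂ R :=
  TensorProduct.ext' fun f g => by simp [sigma', rho_mul]

theorem mul'_surjective : Function.Surjective (LinearMap.mul' ℂ R) :=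
  fun f => ⟨f ⊗ₜ[ℂ] 1, by simp⟩

/-- (i) each `σ_a` maps the ideal `u·A` into itself;
(ii) `ker μ = u·A`; consequently `μ` induces a `ℂ`-linear isomorphism
`A/(u·A) ≃ R` carrying the operator induced by `σ_a` to `ρ^{(β₁+β₂, α₁+α₂)}_a`. -/
theorem stmt11 (β₁ α₁ β₂ α₂ : ℂ) :
    (∀ (a : R), ∀ x ∈ Ideal.span {uEl}, sigma' β₁ α₁ β₂ α₂ a x ∈ Ideal.span {uEl}) ∧
    LinearMap.ker (LinearMap.mul' ℂ R)
      = Submodule.restrictScalars ℂ (Ideal.span {uEl}) ∧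
    ∃ φ : ((R ⊗[ℂ] R) ⧸ Submodule.restrictScalars ℂ (Ideal.span {uEl})) ≃ₗ[ℂ] R,
      (∀ x : R ⊗[ℂ] R, φ (Submodule.Quotient.mk x) = LinearMap.mul' ℂ R x) ∧
      ∀ (a : R) (x : R ⊗[ℂ] R),
        φ (Submodule.Quotient.mk (sigma' β₁ α₁ β₂ α₂ a x))
          = rho (β₁ + β₂) (α₁ + α₂) a (φ (Submodule.Quotient.mk x)) := by
  have hker := ker_mul'_eq_span_uEl
  have hσ (a : R) (x : R ⊗[ℂ] R) : LinearMap.mul' ℂ R (sigma' β₁ α₁ β₂ α₂ a x)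
      = rho (β₁ + β₂) (α₁ + α₂) a (LinearMap.mul' ℂ R x) :=
    LinearMap.congr_fun (mul'_comp_sigma' β₁ α₁ β₂ α₂ a) x
  let φ := (Submodule.quotEquivOfEq _ _ hker.symm).trans
    ((LinearMap.mul' ℂ R).quotKerEquivOfSurjective mul'_surjective)
  have hφ (x : R ⊗[ℂ] R) : φ (Submodule.Quotient.mk x) = LinearMap.mul' ℂ R x := rfl
  refine ⟨fun a x hx => ?_, hker, φ, hφ, fun a x => by simpa only [hφ] using hσ a x⟩
  rw [mem_span_uEl_iff] at hx ⊢
  rw [hσ, hx, map_zero]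

end
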